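/- arXiv:2509.19555 — 3 statements merged into one kernel-verified Lean document; each statement's English description precedes it below -/
import Mathlib

section
/- For the safety Bellman backup T with margin ℓ and discount γ ∈ [0,1), and any two bounded margin functions ℓ₁, ℓ₂ with corresponding fixed points V₁*, V₂*, one has ‖V₁* − V₂*‖_∞ ≤ ‖ℓ₁ − ℓ₂‖_∞. -/
/-! The safety backup is the convex combination `(1 - γ) ℓ + γ min ℓ S` of the margin and of its
minimum with the continuation value `S = sup_a E[V]`. Both `min` and `sup_a E[·]` are
1-Lipschitz in sup norm, so the fixed points satisfy `D ≤ (1 - γ) L + γ max L D` with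
`D = ‖V₁ - V₂‖_∞` and `L = ‖ℓ₁ - ℓ₂‖_∞`; since `γ < 1` this forces `D ≤ L`. -/

open MeasureTheory Set

lemma bddAbove_range_abs_sub {ι : Type*} {u v : ι → ℝ}
    (hu : ∃ C, ∀ i, |u i| ≤ C) (hv : ∃ C, ∀ i, |v i| ≤ C) :
    BddAbove (range fun i => |u i - v i|) := by
  obtain ⟨C, hC⟩ := hu
  obtain ⟨K, hK⟩ := hv
  refine ⟨C + K, ?_⟩
  rintro _ ⟨i, rfl⟩
  exact (abs_sub _ _).trans (add_le_add (hC i) (hK i))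

namespace Real

variable {ι : Sort*} {f g : ι → ℝ} {D : ℝ}

lemma iSup_le_iSup_add (hg : BddAbove (range g)) (hD : 0 ≤ D) (h : ∀ i, f i ≤ g i + D) :
    ⨆ i, f i ≤ (⨆ i, g i) + D := by
  cases isEmpty_or_nonempty ι
  · simpa [Real.iSup_of_isEmpty] using hD
  · exact ciSup_le fun i => (h i).trans (add_le_add_left (le_ciSup hg i) D)

lemma abs_iSup_sub_iSup_le (hf : BddAbove (range f)) (hg : BddAbove (range g)) (hD : 0 ≤ D)
    (h : ∀ i, |f i - g i| ≤ D) : |(⨆ i, f i) - ⨆ i, g i| ≤ D := by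
  have hfg : ⨆ i, f i ≤ (⨆ i, g i) + D :=
    iSup_le_iSup_add hg hD fun i => by linarith [(abs_sub_le_iff.mp (h i)).1]
  have hgf : ⨆ i, g i ≤ (⨆ i, f i) + D :=
    iSup_le_iSup_add hf hD fun i => by linarith [(abs_sub_le_iff.mp (h i)).2]
  exact abs_sub_le_iff.mpr ⟨by linarith, by linarith⟩

end Real

section Integral

variable {Z : Type*} [MeasurableSpace Z] {μ : Measure Z} [IsProbabilityMeasure μ]

lemma integral_le_of_abs_le {V : Z → ℝ} {C : ℝ} (hC : ∀ z, |V z| ≤ C) : ∫ z, V z ∂μ ≤ C := by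
  have := norm_integral_le_of_norm_le_const (μ := μ) (f := V) (.of_forall hC)
  simp only [probReal_univ, mul_one, Real.norm_eq_abs] at this
  exact (le_abs_self _).trans this

lemma abs_integral_sub_integral_le {V W : Z → ℝ} (hV : Integrable V μ) (hW : Integrable W μ)
    {D : ℝ} (h : ∀ z, |V z - W z| ≤ D) : |∫ z, V z ∂μ - ∫ z, W z ∂μ| ≤ D := by
  rw [← integral_sub hV hW]
  simpa using norm_integral_le_of_norm_le_const (μ := μ) (f := V - W) (.of_forall h)

end Integral

lemma abs_iSup_integral_sub_iSup_integral_le {Z A : Type*} [MeasurableSpace Z]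
    (f : Z → A → Measure Z) [∀ z a, IsProbabilityMeasure (f z a)] {V W : Z → ℝ}
    (hVmeas : Measurable V) (hVbdd : ∃ C, ∀ z, |V z| ≤ C)
    (hWmeas : Measurable W) (hWbdd : ∃ C, ∀ z, |W z| ≤ C)
    {D : ℝ} (hD : 0 ≤ D) (h : ∀ z, |V z - W z| ≤ D) (z : Z) :
    |(⨆ a, ∫ z', V z' ∂(f z a)) - ⨆ a, ∫ z', W z' ∂(f z a)| ≤ D := by
  obtain ⟨C, hC⟩ := hVbdd
  obtain ⟨K, hK⟩ := hWbdd
  refine Real.abs_iSup_sub_iSup_le ⟨C, ?_⟩ ⟨K, ?_⟩ hD fun a => ?_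
  · rintro _ ⟨a, rfl⟩
    exact integral_le_of_abs_le hC
  · rintro _ ⟨a, rfl⟩
    exact integral_le_of_abs_le hK
  · exact abs_integral_sub_integral_le
      (.of_bound hVmeas.aestronglyMeasurable C (.of_forall hC))
      (.of_bound hWmeas.aestronglyMeasurable K (.of_forall hK)) h

lemma abs_safetyBackup_sub_le {γ : ℝ} (hγ0 : 0 ≤ γ) (hγ1 : γ ≤ 1) (ℓ₁ ℓ₂ S₁ S₂ : ℝ) :
    |((1 - γ) * ℓ₁ + γ * min ℓ₁ S₁) - ((1 - γ) * ℓ₂ + γ * min ℓ₂ S₂)|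
      ≤ (1 - γ) * |ℓ₁ - ℓ₂| + γ * max |ℓ₁ - ℓ₂| |S₁ - S₂| :=
  calc |((1 - γ) * ℓ₁ + γ * min ℓ₁ S₁) - ((1 - γ) * ℓ₂ + γ * min ℓ₂ S₂)|
      = |(1 - γ) * (ℓ₁ - ℓ₂) + γ * (min ℓ₁ S₁ - min ℓ₂ S₂)| := by ring_nf
    _ ≤ (1 - γ) * |ℓ₁ - ℓ₂| + γ * |min ℓ₁ S₁ - min ℓ₂ S₂| := by
      refine (abs_add_le _ _).trans_eq ?_
      rw [abs_mul, abs_mul, abs_of_nonneg (sub_nonneg.mpr hγ1), abs_of_nonneg hγ0]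
    _ ≤ (1 - γ) * |ℓ₁ - ℓ₂| + γ * max |ℓ₁ - ℓ₂| |S₁ - S₂| := by
      gcongr
      exact abs_min_sub_min_le_max _ _ _ _

lemma le_of_le_one_sub_mul_add_mul_max {γ D L : ℝ} (hγ1 : γ < 1)
    (h : D ≤ (1 - γ) * L + γ * max L D) : D ≤ L := by
  by_contra! hLD
  rw [max_eq_right hLD.le] at h
  nlinarith

theorem fixed_point_margin_perturbation_general
    {Z A : Type*} [MeasurableSpace Z]
    (f : Z → A → Measure Z) (hf : ∀ z a, IsProbabilityMeasure (f z a))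
    (ℓ₁ ℓ₂ : Z → ℝ) (hℓ₁ : ∃ C, ∀ z, |ℓ₁ z| ≤ C) (hℓ₂ : ∃ C, ∀ z, |ℓ₂ z| ≤ C)
    (γ : ℝ) (hγ0 : 0 ≤ γ) (hγ1 : γ < 1)
    (V₁ V₂ : Z → ℝ)
    (hV₁meas : Measurable V₁) (hV₁bdd : ∃ C, ∀ z, |V₁ z| ≤ C)
    (hV₂meas : Measurable V₂) (hV₂bdd : ∃ C, ∀ z, |V₂ z| ≤ C)
    (hfix₁ : ∀ z, V₁ z
      = (1 - γ) * ℓ₁ z + γ * min (ℓ₁ z) (⨆ a : A, ∫ z', V₁ z' ∂(f z a)))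
    (hfix₂ : ∀ z, V₂ z
      = (1 - γ) * ℓ₂ z + γ * min (ℓ₂ z) (⨆ a : A, ∫ z', V₂ z' ∂(f z a))) :
    (⨆ z : Z, |V₁ z - V₂ z|) ≤ ⨆ z : Z, |ℓ₁ z - ℓ₂ z| := by
  set D := ⨆ z : Z, |V₁ z - V₂ z|
  set L := ⨆ z : Z, |ℓ₁ z - ℓ₂ z|
  have hD : ∀ z, |V₁ z - V₂ z| ≤ D := le_ciSup (bddAbove_range_abs_sub hV₁bdd hV₂bdd)
  have hL : ∀ z, |ℓ₁ z - ℓ₂ z| ≤ L := le_ciSup (bddAbove_range_abs_sub hℓ₁ hℓ₂)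
  have hD0 : 0 ≤ D := Real.iSup_nonneg fun _ => abs_nonneg _
  have hL0 : 0 ≤ L := Real.iSup_nonneg fun _ => abs_nonneg _
  have hcont := abs_iSup_integral_sub_iSup_integral_le f hV₁meas hV₁bdd hV₂meas hV₂bdd hD0 hD
  refine le_of_le_one_sub_mul_add_mul_max hγ1 (Real.iSup_le (fun z => ?_) (by positivity))
  rw [hfix₁ z, hfix₂ z]
  refine (abs_safetyBackup_sub_le hγ0 hγ1.le _ _ _ _).trans ?_
  have h1γ : 0 ≤ 1 - γ := by linarith
  have hmax := max_le_max (hL z) (hcont z)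
  gcongr
  exact hL z

/-- Lipschitz dependence of the fixed point on the margin: if `V₁*`, `V₂*` are the
bounded fixed points of the safety Bellman backups with margins `ℓ₁`, `ℓ₂`, then
`‖V₁* - V₂*‖_∞ ≤ ‖ℓ₁ - ℓ₂‖_∞`. -/
theorem fixed_point_margin_perturbation
    {Z A : Type*} [MeasurableSpace Z] [Nonempty Z] [Nonempty A]
    (f : Z → A → Measure Z) (hf : ∀ z a, IsProbabilityMeasure (f z a))
    (ℓ₁ ℓ₂ : Z → ℝ) (hℓ₁ : ∃ C, ∀ z, |ℓ₁ z| ≤ C) (hℓ₂ : ∃ C, ∀ z, |ℓ₂ z| ≤ C)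
    (γ : ℝ) (hγ0 : 0 ≤ γ) (hγ1 : γ < 1)
    (V₁ V₂ : Z → ℝ)
    (hV₁meas : Measurable V₁) (hV₁bdd : ∃ C, ∀ z, |V₁ z| ≤ C)
    (hV₂meas : Measurable V₂) (hV₂bdd : ∃ C, ∀ z, |V₂ z| ≤ C)
    (hfix₁ : ∀ z, V₁ z
      = (1 - γ) * ℓ₁ z + γ * min (ℓ₁ z) (⨆ a : A, ∫ z', V₁ z' ∂(f z a)))
    (hfix₂ : ∀ z, V₂ z
      = (1 - γ) * ℓ₂ z + γ * min (ℓ₂ z) (⨆ a : A, ∫ z', V₂ z' ∂(f z a))) :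
    (⨆ z : Z, |V₁ z - V₂ z|) ≤ ⨆ z : Z, |ℓ₁ z - ℓ₂ z| :=
  fixed_point_margin_perturbation_general f hf ℓ₁ ℓ₂ hℓ₁ hℓ₂ γ hγ0 hγ1 V₁ V₂ hV₁meas hV₁bdd hV₂meas
    hV₂bdd hfix₁ hfix₂
end

section
/- If the margin function ℓ is L-Lipschitz on a metric space Z and the transition map is deterministic, z' = F(z,a), with F being 1-Lipschitz in z uniformly in a, then the unique fixed point V* of the safety Bellman backup (TV)(z) = (1−γ)ℓ(z) + γ·min{ℓ(z), sup_a V(F(z,a))} is L-Lipschitz. -/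
/-- If `ℓ` is `L`-Lipschitz and the deterministic dynamics `F` are `1`-Lipschitz in the
state uniformly in the action, then the unique bounded fixed point of the safety
Bellman backup `(TV)(z) = (1-γ)ℓ(z) + γ min{ℓ(z), sup_a V(F(z,a))}` is `L`-Lipschitz. -/
theorem fixed_point_lipschitz
    {Z A : Type*} [MetricSpace Z] [Nonempty A]
    (ℓ : Z → ℝ) (L : NNReal) (hℓlip : LipschitzWith L ℓ) (hℓbdd : ∃ C, ∀ z, |ℓ z| ≤ C)
    (γ : ℝ) (hγ0 : 0 ≤ γ) (hγ1 : γ < 1)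
    (F : Z → A → Z) (hF : ∀ a : A, LipschitzWith 1 (fun z => F z a))
    (Vstar : Z → ℝ) (hVbdd : ∃ C, ∀ z, |Vstar z| ≤ C)
    (hfix : ∀ z, Vstar z
      = (1 - γ) * ℓ z + γ * min (ℓ z) (⨆ a : A, Vstar (F z a))) :
    LipschitzWith L Vstar := by
  rcases hVbdd with ⟨C, hC⟩
  rcases isEmpty_or_nonempty Z with hZ | hZ
  · intro x; exact (hZ.false x).elim
  set S : Z → ℝ := fun z => ⨆ a : A, Vstar (F z a) with hSdef
  have hbdd : ∀ z : Z, BddAbove (Set.range fun a : A => Vstar (F z a)) := by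
    intro z
    exact ⟨C, by rintro _ ⟨a, rfl⟩; exact (abs_le.1 (hC _)).2⟩
  set D : ℝ := ⨆ p : Z × Z, (Vstar p.1 - Vstar p.2 - L * dist p.1 p.2) with hDdef
  have hDbdd : BddAbove (Set.range fun p : Z × Z =>
      Vstar p.1 - Vstar p.2 - L * dist p.1 p.2) := by
    refine ⟨2 * C, ?_⟩
    rintro _ ⟨p, rfl⟩
    have h1 := abs_le.1 (hC p.1)
    have h2 := abs_le.1 (hC p.2)
    have h3 : 0 ≤ (L : ℝ) * dist p.1 p.2 := mul_nonneg L.coe_nonneg dist_nonneg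
    simp only
    linarith [h1.2, h2.1]
  have hle : ∀ z1 z2 : Z, Vstar z1 - Vstar z2 - L * dist z1 z2 ≤ D :=
    fun z1 z2 => le_ciSup hDbdd (z1, z2)
  have key : ∀ z1 z2 : Z,
      Vstar z1 - Vstar z2 ≤ L * dist z1 z2 + γ * max 0 D := by
    intro z1 z2
    have hmax0 : (0 : ℝ) ≤ max 0 D := le_max_left _ _
    have hS12 : S z1 ≤ S z2 + ((L : ℝ) * dist z1 z2 + max 0 D) := by
      apply ciSup_le
      intro a
      have h1 : Vstar (F z1 a) - Vstar (F z2 a) - L * dist (F z1 a) (F z2 a) ≤ D :=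
        hle _ _
      have h2 : dist (F z1 a) (F z2 a) ≤ dist z1 z2 := by
        have := (hF a).dist_le_mul z1 z2
        simpa using this
      have h3 : Vstar (F z2 a) ≤ S z2 := le_ciSup (hbdd z2) a
      have h4 : D ≤ max 0 D := le_max_right _ _
      have h5 : (L : ℝ) * dist (F z1 a) (F z2 a) ≤ L * dist z1 z2 :=
        mul_le_mul_of_nonneg_left h2 L.coe_nonneg
      linarith
    have hℓd : ℓ z1 - ℓ z2 ≤ L * dist z1 z2 := by
      have h := hℓlip.dist_le_mul z1 z2
      rw [Real.dist_eq] at h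
      exact le_trans (le_abs_self _) h
    have hmin : min (ℓ z1) (S z1) ≤
        min (ℓ z2) (S z2) + ((L : ℝ) * dist z1 z2 + γ * 0 + max 0 D) := by
      have ha : min (ℓ z1) (S z1) ≤ ℓ z2 + ((L : ℝ) * dist z1 z2 + γ * 0 + max 0 D) := by
        have := min_le_left (ℓ z1) (S z1); linarith
      have hb : min (ℓ z1) (S z1) ≤ S z2 + ((L : ℝ) * dist z1 z2 + γ * 0 + max 0 D) := by
        have := min_le_right (ℓ z1) (S z1); linarith
      have := le_min ha hb
      rwa [min_add_add_right] at this
    have e1 := hfix z1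
    have e2 := hfix z2
    have hγ1' : 0 ≤ 1 - γ := by linarith
    nlinarith [mul_le_mul_of_nonneg_left hℓd hγ1', mul_le_mul_of_nonneg_left hmin hγ0]
  have hD0 : D ≤ γ * max 0 D := by
    apply ciSup_le
    intro p
    have := key p.1 p.2

    linarith
  have hmaxle : max 0 D ≤ 0 := by
    have h0 : (0 : ℝ) ≤ γ * max 0 D := mul_nonneg hγ0 (le_max_left _ _)
    have : max 0 D ≤ γ * max 0 D := max_le h0 hD0
    nlinarith [le_max_left (0 : ℝ) D]
  have hDle : D ≤ 0 := le_trans (le_max_right 0 D) hmaxle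
  apply LipschitzWith.of_dist_le_mul
  intro x y
  rw [Real.dist_eq, abs_sub_le_iff]
  constructor
  · have := hle x y; linarith
  · have := hle y x; rw [dist_comm] at this; linarith
end

section
/- Combining the margin-perturbation bound with the constraint parameterization: if V*(·; c) denotes the fixed point of the safety Bellman backup with margin ℓ(z;c) = −‖g(z)−g(c)‖, then ‖V*(·;c₁) − V*(·;c₂)‖_∞ ≤ ‖g(c₁) − g(c₂)‖ for any constraint encodings c₁, c₂. -/
open MeasureTheory

/-! The backup `V ↦ (1-γ)ℓ + γ min ℓ (sup_a E V)` is a `γ`-contraction in `V` and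
`1`-Lipschitz in the margin `ℓ`: since `min` and `sup` are `1`-Lipschitz in the sup norm and
expectations under probability measures are sup-norm contractions, two fixed points satisfy
`D ≤ (1-γ)ε + γ max ε D` with `D = ‖V₁ - V₂‖_∞` and `ε = ‖ℓ₁ - ℓ₂‖_∞`, hence `D ≤ ε`.
The margins `-‖g z - g c‖` differ by at most `‖g c₁ - g c₂‖` by the reverse triangle
inequality. -/

lemma Real.abs_iSup_sub_iSup_le_s17 {ι : Type*} {u v : ι → ℝ} {D : ℝ} (hD : 0 ≤ D)
    (hu : BddAbove (Set.range u)) (hv : BddAbove (Set.range v))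
    (huv : ∀ i, |u i - v i| ≤ D) : |(⨆ i, u i) - ⨆ i, v i| ≤ D := by
  rcases isEmpty_or_nonempty ι with hι | hι
  -- both suprema are `0` over an empty index type
  · simpa using hD
  rw [abs_sub_le_iff, sub_le_iff_le_add, sub_le_iff_le_add]
  constructor
  · exact ciSup_le fun i => by linarith [(abs_le.mp (huv i)).2, le_ciSup hv i]
  · exact ciSup_le fun i => by linarith [(abs_le.mp (huv i)).1, le_ciSup hu i]

section Expectation

variable {Z : Type*} [MeasurableSpace Z] {μ : Measure Z} [IsProbabilityMeasure μ]

lemma integrable_of_abs_le {V : Z → ℝ} {C : ℝ} (hV : Measurable V) (hC : ∀ z, |V z| ≤ C) :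
    Integrable V μ :=
  (integrable_const C).mono' hV.aestronglyMeasurable
    (.of_forall fun z => (Real.norm_eq_abs _).trans_le (hC z))

lemma abs_integral_le_of_abs_le {V : Z → ℝ} {C : ℝ} (hC : ∀ z, |V z| ≤ C) :
    |∫ z, V z ∂μ| ≤ C := by
  simpa using norm_integral_le_of_norm_le_const (μ := μ) (f := V) (.of_forall hC)

lemma abs_integral_sub_integral_le_s17 {V₁ V₂ : Z → ℝ} {D : ℝ}
    (h₁ : Integrable V₁ μ) (h₂ : Integrable V₂ μ) (hD : ∀ z, |V₁ z - V₂ z| ≤ D) :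
    |(∫ z, V₁ z ∂μ) - ∫ z, V₂ z ∂μ| ≤ D := by
  rw [← integral_sub h₁ h₂]
  exact abs_integral_le_of_abs_le hD

end Expectation

section SafetyBackup

variable {Z A : Type*} [MeasurableSpace Z]

noncomputable def safetyBackup (f : Z → A → Measure Z) (γ : ℝ) (ℓ V : Z → ℝ) (z : Z) : ℝ :=
  (1 - γ) * ℓ z + γ * min (ℓ z) (⨆ a, ∫ z', V z' ∂(f z a))

lemma abs_iSup_integral_sub_iSup_integral_le_s17 (f : Z → A → Measure Z)
    [∀ z a, IsProbabilityMeasure (f z a)] {V₁ V₂ : Z → ℝ} {C₁ C₂ D : ℝ}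
    (hV₁ : Measurable V₁) (hC₁ : ∀ z, |V₁ z| ≤ C₁)
    (hV₂ : Measurable V₂) (hC₂ : ∀ z, |V₂ z| ≤ C₂)
    (hD₀ : 0 ≤ D) (hD : ∀ z, |V₁ z - V₂ z| ≤ D) (z : Z) :
    |(⨆ a, ∫ z', V₁ z' ∂(f z a)) - ⨆ a, ∫ z', V₂ z' ∂(f z a)| ≤ D := by
  have bdd : ∀ {V : Z → ℝ} {C : ℝ}, (∀ z, |V z| ≤ C) →
      BddAbove (Set.range fun a => ∫ z', V z' ∂(f z a)) := fun hC =>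
    ⟨_, Set.forall_mem_range.mpr fun _ => (le_abs_self _).trans (abs_integral_le_of_abs_le hC)⟩
  exact Real.abs_iSup_sub_iSup_le_s17 hD₀ (bdd hC₁) (bdd hC₂) fun a =>
    abs_integral_sub_integral_le_s17 (integrable_of_abs_le hV₁ hC₁)
      (integrable_of_abs_le hV₂ hC₂) hD

lemma abs_safetyBackup_sub_le_s17 (f : Z → A → Measure Z) {γ ε D : ℝ} (hγ₀ : 0 ≤ γ) (hγ₁ : γ ≤ 1)
    {ℓ₁ ℓ₂ V₁ V₂ : Z → ℝ} {z : Z} (hℓ : |ℓ₁ z - ℓ₂ z| ≤ ε)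
    (hV : |(⨆ a, ∫ z', V₁ z' ∂(f z a)) - ⨆ a, ∫ z', V₂ z' ∂(f z a)| ≤ D) :
    |safetyBackup f γ ℓ₁ V₁ z - safetyBackup f γ ℓ₂ V₂ z| ≤ (1 - γ) * ε + γ * max ε D := by
  have hmin := (abs_min_sub_min_le_max _ _ _ _).trans (max_le_max hℓ hV)
  unfold safetyBackup
  calc _ = |(1 - γ) * (ℓ₁ z - ℓ₂ z) + γ * (min (ℓ₁ z) (⨆ a, ∫ z', V₁ z' ∂(f z a))
          - min (ℓ₂ z) (⨆ a, ∫ z', V₂ z' ∂(f z a)))| := by ring_nf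
    _ ≤ (1 - γ) * |ℓ₁ z - ℓ₂ z| + γ * |min (ℓ₁ z) (⨆ a, ∫ z', V₁ z' ∂(f z a))
          - min (ℓ₂ z) (⨆ a, ∫ z', V₂ z' ∂(f z a))| := by
      refine (abs_add_le _ _).trans_eq ?_
      rw [abs_mul, abs_mul, abs_of_nonneg (sub_nonneg.mpr hγ₁), abs_of_nonneg hγ₀]
    _ ≤ (1 - γ) * ε + γ * max ε D := by gcongr

theorem iSup_abs_sub_le_of_eq_safetyBackup (f : Z → A → Measure Z)
    [∀ z a, IsProbabilityMeasure (f z a)] {γ ε : ℝ} (hγ₀ : 0 ≤ γ) (hγ₁ : γ < 1)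
    {ℓ₁ ℓ₂ V₁ V₂ : Z → ℝ} (hε₀ : 0 ≤ ε) (hℓ : ∀ z, |ℓ₁ z - ℓ₂ z| ≤ ε)
    (hV₁ : Measurable V₁) (hV₁bdd : ∃ C, ∀ z, |V₁ z| ≤ C)
    (hV₂ : Measurable V₂) (hV₂bdd : ∃ C, ∀ z, |V₂ z| ≤ C)
    (hfix₁ : V₁ = safetyBackup f γ ℓ₁ V₁) (hfix₂ : V₂ = safetyBackup f γ ℓ₂ V₂) :
    (⨆ z, |V₁ z - V₂ z|) ≤ ε := by
  obtain ⟨C₁, hC₁⟩ := hV₁bdd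
  obtain ⟨C₂, hC₂⟩ := hV₂bdd
  set D := ⨆ z, |V₁ z - V₂ z|
  have hD₀ : 0 ≤ D := Real.iSup_nonneg fun _ => abs_nonneg _
  have hD : ∀ z, |V₁ z - V₂ z| ≤ D := le_ciSup
    ⟨C₁ + C₂, Set.forall_mem_range.mpr fun z =>
      (abs_sub _ _).trans (add_le_add (hC₁ z) (hC₂ z))⟩
  have hcontr : D ≤ (1 - γ) * ε + γ * max ε D := by
    refine Real.iSup_le (fun z => ?_) (by positivity)
    rw [hfix₁, hfix₂]
    exact abs_safetyBackup_sub_le_s17 f hγ₀ hγ₁.le (hℓ z)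
      (abs_iSup_integral_sub_iSup_integral_le_s17 f hV₁ hC₁ hV₂ hC₂ hD₀ hD z)
  rcases max_cases ε D with ⟨hmax, _⟩ | ⟨hmax, _⟩ <;> rw [hmax] at hcontr <;> nlinarith

end SafetyBackup

theorem constraint_parameterized_value_lipschitz_general
    {Z A : Type*} [MeasurableSpace Z] {k : ℕ}
    (f : Z → A → Measure Z) (hf : ∀ z a, IsProbabilityMeasure (f z a))
    (g : Z → EuclideanSpace ℝ (Fin k))
    (γ : ℝ) (hγ0 : 0 ≤ γ) (hγ1 : γ < 1)
    (c₁ c₂ : Z) (V₁ V₂ : Z → ℝ)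
    (hV₁meas : Measurable V₁) (hV₁bdd : ∃ C, ∀ z, |V₁ z| ≤ C)
    (hV₂meas : Measurable V₂) (hV₂bdd : ∃ C, ∀ z, |V₂ z| ≤ C)
    (hfix₁ : ∀ z, V₁ z
      = (1 - γ) * (-‖g z - g c₁‖)
        + γ * min (-‖g z - g c₁‖) (⨆ a : A, ∫ z', V₁ z' ∂(f z a)))
    (hfix₂ : ∀ z, V₂ z
      = (1 - γ) * (-‖g z - g c₂‖)
        + γ * min (-‖g z - g c₂‖) (⨆ a : A, ∫ z', V₂ z' ∂(f z a))) :
    (⨆ z : Z, |V₁ z - V₂ z|) ≤ ‖g c₁ - g c₂‖ := by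
  have hmargin : ∀ z, |-‖g z - g c₁‖ - -‖g z - g c₂‖| ≤ ‖g c₁ - g c₂‖ := fun z => by
    rw [neg_sub_neg, ← sub_sub_sub_cancel_left (g c₂) (g c₁) (g z)]
    exact abs_norm_sub_norm_le _ _
  exact iSup_abs_sub_le_of_eq_safetyBackup f hγ0 hγ1 (norm_nonneg _) hmargin
    hV₁meas hV₁bdd hV₂meas hV₂bdd (funext hfix₁) (funext hfix₂)

/-- Constraint sensitivity of the parameterized safety value: if `V*(·;c)` is the
bounded fixed point of the safety Bellman backup with margin `ℓ(z;c) = -‖g(z)-g(c)‖`,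
then `‖V*(·;c₁) - V*(·;c₂)‖_∞ ≤ ‖g(c₁) - g(c₂)‖`. -/
theorem constraint_parameterized_value_lipschitz
    {Z A : Type*} [MeasurableSpace Z] [Nonempty Z] [Nonempty A] {k : ℕ}
    (f : Z → A → Measure Z) (hf : ∀ z a, IsProbabilityMeasure (f z a))
    (g : Z → EuclideanSpace ℝ (Fin k)) (hgbdd : ∃ C, ∀ z, ‖g z‖ ≤ C)
    (γ : ℝ) (hγ0 : 0 ≤ γ) (hγ1 : γ < 1)
    (c₁ c₂ : Z) (V₁ V₂ : Z → ℝ)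
    (hV₁meas : Measurable V₁) (hV₁bdd : ∃ C, ∀ z, |V₁ z| ≤ C)
    (hV₂meas : Measurable V₂) (hV₂bdd : ∃ C, ∀ z, |V₂ z| ≤ C)
    (hfix₁ : ∀ z, V₁ z
      = (1 - γ) * (-‖g z - g c₁‖)
        + γ * min (-‖g z - g c₁‖) (⨆ a : A, ∫ z', V₁ z' ∂(f z a)))
    (hfix₂ : ∀ z, V₂ z
      = (1 - γ) * (-‖g z - g c₂‖)
        + γ * min (-‖g z - g c₂‖) (⨆ a : A, ∫ z', V₂ z' ∂(f z a))) :
    (⨆ z : Z, |V₁ z - V₂ z|) ≤ ‖g c₁ - g c₂‖ :=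
  constraint_parameterized_value_lipschitz_general f hf g γ hγ0 hγ1 c₁ c₂ V₁ V₂ hV₁meas hV₁bdd
    hV₂meas hV₂bdd hfix₁ hfix₂
end
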